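/- (Noisy data.) Let K ⊆ C(Ω) be compact in C(Ω), let 0 < τ < 1, 0 < γ ≤ 1, and let δ > 0 satisfy δ ≤ τ². Let Σ ⊆ C(Ω) be such that every f ∈ K admits g ∈ Σ with ‖f − g‖_{C(Ω)} ≤ δ. Let f ∈ K, let η ∈ ℝ^m with ‖η‖ ≤ γ, and set w̃ := λ_x(f) + η. Suppose f̂ ∈ Σ minimizes the loss L_{K,τ}(g) := τ‖w̃ − λ_x(g)‖ + dist(g,K)_{C(Ω)} over g ∈ Σ, where dist(g,K)_{C(Ω)} := inf_{h ∈ K} ‖g − h‖_{C(Ω)}. Then ‖j(f) − j(f̂)‖_X ≤ 2 R(K(w̃, γ + 5τ))_X + 3 C_X τ. -/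

import Mathlib

/-- Chebyshev radius in `X` of the image under `J` of a set `S`:
`R(S)_X = inf_{z ∈ X} sup_{f ∈ S} ‖J f - z‖`. -/
noncomputable def chebRadMap {A X : Type*} [NormedAddCommGroup X]
    (J : A → X) (S : Set A) : ℝ :=
  ⨅ z : X, ⨆ f : S, ‖J (f : A) - z‖

/-- Weighted euclidean norm on `ℝ^m`: `‖v‖ = ( m⁻¹ ∑ v_j² )^{1/2}`. -/
noncomputable def wNorm {m : ℕ} (v : Fin m → ℝ) : ℝ :=
  Real.sqrt ((∑ j, v j ^ 2) / m)

/-!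
Compare `f̂` with the competitor `g ∈ Σ` that is `δ`-close to `f`: minimality gives
`τ‖w̃ − λ_x(f̂)‖ + dist(f̂, K) ≤ τ(γ + δ) + δ`, and `δ ≤ τ²` splits this into
`‖w̃ − λ_x(f̂)‖ ≤ γ + 2τ` and `dist(f̂, K) ≤ 3τ`. A nearest point `h ∈ K` to `f̂` then fits the
data up to `γ + 5τ`, as does `f`, so both lie in `K(w̃, γ + 5τ)` and
`‖j(f) − j(h)‖ ≤ 2R(K(w̃, γ + 5τ))_X`, while `‖j(h) − j(f̂)‖ ≤ C_X ‖h − f̂‖ ≤ 3C_X τ`.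
-/

open Metric

section WeightedNorm

variable {m : ℕ}

lemma wNorm_nonneg (v : Fin m → ℝ) : 0 ≤ wNorm v := Real.sqrt_nonneg _

lemma wNorm_eq_norm_div_sqrt (v : Fin m → ℝ) :
    wNorm v = ‖WithLp.toLp 2 v‖ / Real.sqrt m := by
  rw [wNorm, EuclideanSpace.norm_eq, Real.sqrt_div (by positivity)]
  simp only [Real.norm_eq_abs, sq_abs]

lemma wNorm_sub_le (a b c : Fin m → ℝ) :
    wNorm (fun j => a j - c j) ≤ wNorm (fun j => a j - b j) + wNorm (fun j => b j - c j) := by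
  simp only [wNorm_eq_norm_div_sqrt, ← add_div]
  gcongr
  have hsplit : (WithLp.toLp 2 fun j => a j - c j) =
      WithLp.toLp 2 (fun j => a j - b j) + WithLp.toLp 2 (fun j => b j - c j) := by
    ext j
    simp
  rw [hsplit]
  exact norm_add_le _ _

lemma wNorm_sub_comm (a b : Fin m → ℝ) :
    wNorm (fun j => a j - b j) = wNorm (fun j => b j - a j) := by
  simp only [wNorm, ← neg_sub (b _), neg_sq]

lemma wNorm_le_of_forall_abs_le {v : Fin m → ℝ} {M : ℝ} (hM : 0 ≤ M) (h : ∀ j, |v j| ≤ M) :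
    wNorm v ≤ M := by
  rw [wNorm, ← Real.sqrt_sq hM]
  gcongr
  rcases Nat.eq_zero_or_pos m with rfl | hm
  · simp [sq_nonneg]
  rw [div_le_iff₀ (by exact_mod_cast hm)]
  calc ∑ j, v j ^ 2 ≤ ∑ _j : Fin m, M ^ 2 := Finset.sum_le_sum fun j _ => by
        rw [← sq_abs]
        exact pow_le_pow_left₀ (abs_nonneg _) (h j) 2
    _ = M ^ 2 * m := by simp [mul_comm]

lemma wNorm_sample_sub_le_norm {α : Type*} [TopologicalSpace α] [CompactSpace α]
    (x : Fin m → α) (g h : C(α, ℝ)) : wNorm (fun j => g (x j) - h (x j)) ≤ ‖g - h‖ :=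
  wNorm_le_of_forall_abs_le (norm_nonneg _) fun j => (g - h).norm_coe_le_norm (x j)

end WeightedNorm

lemma norm_sub_le_two_mul_chebRadMap {A X : Type*} [NormedAddCommGroup X]
    {J : A → X} {S : Set A} (hS : Bornology.IsBounded (J '' S)) {u v : A}
    (hu : u ∈ S) (hv : v ∈ S) :
    ‖J u - J v‖ ≤ 2 * chebRadMap J S := by
  obtain ⟨M, hM⟩ := isBounded_iff_forall_norm_le.mp hS
  suffices ∀ z : X, ‖J u - J v‖ / 2 ≤ ⨆ f : S, ‖J (f : A) - z‖ by
    have := le_ciInf this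
    rw [chebRadMap]
    linarith
  intro z
  have hbdd : BddAbove (Set.range fun f : S => ‖J (f : A) - z‖) := by
    refine ⟨M + ‖z‖, ?_⟩
    rintro _ ⟨g, rfl⟩
    linarith [norm_sub_le (J g) z, hM _ ⟨g, g.2, rfl⟩]
  have hu' : ‖J u - z‖ ≤ ⨆ f : S, ‖J (f : A) - z‖ := le_ciSup hbdd ⟨u, hu⟩
  have hv' : ‖J v - z‖ ≤ ⨆ f : S, ‖J (f : A) - z‖ := le_ciSup hbdd ⟨v, hv⟩
  linarith [norm_sub_le_norm_sub_add_norm_sub (J u) z (J v), norm_sub_rev z (J v)]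

lemma nonneg_of_forall_norm_le_mul_norm {E X : Type*} [NormedAddCommGroup E] [Nontrivial E]
    [NormedAddCommGroup X] {J : E → X} {C : ℝ} (hJ : ∀ g, ‖J g‖ ≤ C * ‖g‖) : 0 ≤ C := by
  obtain ⟨g, hg⟩ := exists_ne (0 : E)
  exact nonneg_of_mul_nonneg_left ((norm_nonneg _).trans (hJ g)) (norm_pos_iff.mpr hg)

theorem norm_sub_le_two_mul_chebRadMap_add {α X : Type*} [TopologicalSpace α] [CompactSpace α]
    [NormedAddCommGroup X] {m : ℕ} (x : Fin m → α) (J : C(α, ℝ) →+ X) {C : ℝ} (hC : 0 ≤ C)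
    (hJ : ∀ g, ‖J g‖ ≤ C * ‖g‖) {K : Set C(α, ℝ)} (hK : IsCompact K) (w : Fin m → ℝ)
    {ρ ε : ℝ} {f g : C(α, ℝ)} (hf : f ∈ K) (hfw : wNorm (fun j => f (x j) - w j) ≤ ρ)
    (hgK : infDist g K ≤ ε) (hgw : wNorm (fun j => g (x j) - w j) + ε ≤ ρ) :
    ‖J f - J g‖ ≤
      2 * chebRadMap (fun u => J u) {u ∈ K | wNorm (fun j => u (x j) - w j) ≤ ρ} + C * ε := by
  set S := {u ∈ K | wNorm (fun j => u (x j) - w j) ≤ ρ}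
  obtain ⟨h, hhK, hgh⟩ := hK.exists_infDist_eq_dist ⟨f, hf⟩ g
  have hgh' : ‖h - g‖ ≤ ε := by rwa [← dist_eq_norm, dist_comm, ← hgh]
  have hhS : h ∈ S := by
    refine ⟨hhK, ?_⟩
    linarith [wNorm_sub_le (fun j => h (x j)) (fun j => g (x j)) w,
      wNorm_sample_sub_le_norm x h g]
  have hJS : Bornology.IsBounded ((fun u => J u) '' S) := by
    obtain ⟨M, hM⟩ := isBounded_iff_forall_norm_le.mp hK.isBounded
    refine isBounded_iff_forall_norm_le.mpr ⟨C * M, ?_⟩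
    rintro _ ⟨u, hu, rfl⟩
    exact (hJ u).trans (mul_le_mul_of_nonneg_left (hM u hu.1) hC)
  calc ‖J f - J g‖ ≤ ‖J f - J h‖ + ‖J (h - g)‖ := by
        rw [map_sub]; exact norm_sub_le_norm_sub_add_norm_sub _ _ _
    _ ≤ 2 * chebRadMap (fun u => J u) S + C * ε := by
        gcongr
        · exact norm_sub_le_two_mul_chebRadMap hJS ⟨hf, hfw⟩ hhS
        · exact (hJ _).trans (mul_le_mul_of_nonneg_left hgh' hC)

/-- The loss `L_{K,τ}(g) = τ‖w − λ_x(g)‖ + dist(g, K)` for data `w`. -/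
noncomputable def dataLoss {α : Type*} [TopologicalSpace α] [CompactSpace α] {m : ℕ}
    (x : Fin m → α) (K : Set C(α, ℝ)) (τ : ℝ) (w : Fin m → ℝ) (g : C(α, ℝ)) : ℝ :=
  τ * wNorm (fun j => w j - g (x j)) + infDist g K

lemma dataLoss_le_of_mem {α : Type*} [TopologicalSpace α] [CompactSpace α] {m : ℕ}
    (x : Fin m → α) {K : Set C(α, ℝ)} {τ : ℝ} (hτ : 0 ≤ τ) (w : Fin m → ℝ) {f : C(α, ℝ)}
    (hf : f ∈ K) (g : C(α, ℝ)) :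
    dataLoss x K τ w g ≤ τ * (wNorm (fun j => w j - f (x j)) + ‖f - g‖) + ‖f - g‖ := by
  have hgK : infDist g K ≤ ‖f - g‖ := by
    rw [← dist_eq_norm, dist_comm]
    exact infDist_le_dist_of_mem hf
  have hgw := wNorm_sub_le w (fun j => f (x j)) (fun j => g (x j))
  have hfg := wNorm_sample_sub_le_norm x f g
  unfold dataLoss
  gcongr
  linarith

lemma le_and_le_of_mul_add_le {τ γ δ a b : ℝ} (hτ0 : 0 < τ) (hτ1 : τ ≤ 1) (hγ1 : γ ≤ 1)
    (hδτ : δ ≤ τ ^ 2) (ha : 0 ≤ a) (hb : 0 ≤ b) (h : τ * a + b ≤ τ * (γ + δ) + δ) :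
    a ≤ γ + 2 * τ ∧ b ≤ 3 * τ := by
  have h' : τ * a + b ≤ τ * γ + 2 * τ ^ 2 := by
    nlinarith [mul_le_mul_of_nonneg_left hδτ hτ0.le]
  have hτa := mul_nonneg hτ0.le ha
  exact ⟨le_of_mul_le_mul_left (by linarith) hτ0, by nlinarith⟩

theorem stmt_10_general
    {d : ℕ} {Ω : Set (EuclideanSpace ℝ (Fin d))} [CompactSpace Ω]
    {X : Type*} [NormedAddCommGroup X] [NormedSpace ℝ X]
    {m : ℕ} (hm : 0 < m) (x : Fin m → Ω)
    (J : C(Ω, ℝ) →ₗ[ℝ] X)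
    (CX : ℝ) (hJ : ∀ g : C(Ω, ℝ), ‖J g‖ ≤ CX * ‖g‖)
    (K : Set C(Ω, ℝ)) (hK : IsCompact K)
    (τ γ δ : ℝ) (hτ0 : 0 < τ) (hτ1 : τ < 1) (hγ1 : γ ≤ 1)
    (hδτ : δ ≤ τ ^ 2)
    (Sig : Set C(Ω, ℝ))
    (happrox : ∀ f ∈ K, ∃ g ∈ Sig, ‖f - g‖ ≤ δ)
    (f : C(Ω, ℝ)) (hf : f ∈ K)
    (η : Fin m → ℝ) (hη : wNorm η ≤ γ)
    (fhat : C(Ω, ℝ))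
    (hmin : ∀ g ∈ Sig,
      τ * wNorm (fun j => (f (x j) + η j) - fhat (x j)) + Metric.infDist fhat K ≤
        τ * wNorm (fun j => (f (x j) + η j) - g (x j)) + Metric.infDist g K) :
    ‖J f - J fhat‖ ≤
      2 * chebRadMap (fun u => J u)
        {u ∈ K | wNorm (fun j => u (x j) - (f (x j) + η j)) ≤ γ + 5 * τ} +
      3 * CX * τ := by
  have : Nonempty Ω := ⟨x ⟨0, hm⟩⟩
  set w : Fin m → ℝ := fun j => f (x j) + η j
  have hwf : wNorm (fun j => w j - f (x j)) = wNorm η := by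
    simp only [w, add_sub_cancel_left]
  obtain ⟨g, hgSig, hfg⟩ := happrox f hf
  have hloss : dataLoss x K τ w fhat ≤ τ * (γ + δ) + δ := calc
    dataLoss x K τ w fhat ≤ dataLoss x K τ w g := hmin g hgSig
    _ ≤ τ * (wNorm η + ‖f - g‖) + ‖f - g‖ := hwf ▸ dataLoss_le_of_mem x hτ0.le w hf g
    _ ≤ τ * (γ + δ) + δ := by gcongr
  obtain ⟨hfhatw, hD⟩ := le_and_le_of_mul_add_le hτ0 hτ1.le hγ1 hδτ (wNorm_nonneg _)
    infDist_nonneg hloss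
  have hfw : wNorm (fun j => f (x j) - w j) ≤ γ + 5 * τ := by
    rw [wNorm_sub_comm, hwf]
    linarith
  have hfhatw' : wNorm (fun j => fhat (x j) - w j) + 3 * τ ≤ γ + 5 * τ := by
    rw [wNorm_sub_comm]
    linarith
  calc ‖J f - J fhat‖ ≤ 2 * chebRadMap (fun u => J u)
        {u ∈ K | wNorm (fun j => u (x j) - w j) ≤ γ + 5 * τ} + CX * (3 * τ) :=
        norm_sub_le_two_mul_chebRadMap_add x J.toAddMonoidHom
          (nonneg_of_forall_norm_le_mul_norm hJ) hJ hK w hf hfw hD hfhatw'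
    _ = _ := by ring

/-- Noisy point-value data: if `w̃ = λ_x(f) + η` with `‖η‖ ≤ γ ≤ 1`, `0 < τ < 1`,
`δ ≤ τ²`, and `f̂` minimizes `L_{K,τ}(g) := τ‖w̃ − λ_x(g)‖ + dist(g,K)_{C(Ω)}`
over `Σ`, then `‖j(f) − j(f̂)‖_X ≤ 2 R(K(w̃, γ+5τ))_X + 3 C_X τ`. -/
theorem stmt_10
    {d : ℕ} {Ω : Set (EuclideanSpace ℝ (Fin d))} [CompactSpace Ω]
    {X : Type*} [NormedAddCommGroup X] [NormedSpace ℝ X] [CompleteSpace X]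
    {m : ℕ} (hm : 0 < m) (x : Fin m → Ω)
    (J : C(Ω, ℝ) →ₗ[ℝ] X) (hJinj : Function.Injective J)
    (CX : ℝ) (hJ : ∀ g : C(Ω, ℝ), ‖J g‖ ≤ CX * ‖g‖)
    (K : Set C(Ω, ℝ)) (hK : IsCompact K)
    (τ γ δ : ℝ) (hτ0 : 0 < τ) (hτ1 : τ < 1) (hγ0 : 0 < γ) (hγ1 : γ ≤ 1)
    (hδ : 0 < δ) (hδτ : δ ≤ τ ^ 2)
    (Sig : Set C(Ω, ℝ))
    (happrox : ∀ f ∈ K, ∃ g ∈ Sig, ‖f - g‖ ≤ δ)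
    (f : C(Ω, ℝ)) (hf : f ∈ K)
    (η : Fin m → ℝ) (hη : wNorm η ≤ γ)
    (fhat : C(Ω, ℝ)) (hfhat : fhat ∈ Sig)
    (hmin : ∀ g ∈ Sig,
      τ * wNorm (fun j => (f (x j) + η j) - fhat (x j)) + Metric.infDist fhat K ≤
        τ * wNorm (fun j => (f (x j) + η j) - g (x j)) + Metric.infDist g K) :
    ‖J f - J fhat‖ ≤
      2 * chebRadMap (fun u => J u)
        {u ∈ K | wNorm (fun j => u (x j) - (f (x j) + η j)) ≤ γ + 5 * τ} +
      3 * CX * τ :=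
  stmt_10_general hm x J CX hJ K hK τ γ δ hτ0 hτ1 hγ1 hδτ Sig happrox f hf η hη fhat hmin
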